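/- Uniqueness of fixed points modulo bisimulation: suppose the formula φ is modalised in the variable p and ψ is a formula with ψ ≃ φ[p:ψ]. Then ψ ≃ Ϝp.φ. -/

import Mathlib

/-!
Cyclic syntax for Cyclic Henkin Logic (Visser, "Cyclic Henkin Logic").

A graph is a directed pointed labeled graph with ordered successors;
formulas of the cyclic modal language `𝕃°` are such graphs over the
modal labels, whose box-occurrences guard all cycles.
-/


theorem finite_option {α : Type} (h : Finite α) : Finite (Option α) := by
  haveI := h
  haveI : Fintype α := Fintype.ofFinite _
  exact Finite.of_fintype _

/-- Directed pointed labeled graphs with ordered successors over a label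
set `L` with arity function `ar`.  The vertex set is finite. -/
structure RGraph (L : Type) (ar : L → ℕ) : Type 1 where
  V : Type
  fin : Finite V
  root : V
  label : V → L
  succ : (a : V) → Fin (ar (label a)) → V

namespace RGraph

variable {L : Type} {ar : L → ℕ}

/-- The edge relation `a Ŝ b`. -/
def Edge (G : RGraph L ar) (a b : G.V) : Prop := ∃ i, G.succ a i = b

/-- Every vertex is reachable from the root by a finite path. -/
def Reachable (G : RGraph L ar) : Prop :=
  ∀ a, Relation.ReflTransGen G.Edge G.root a

/-- `C` is a cycle: its elements can be arranged in a closed path of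
pairwise distinct vertices. -/
def IsCycle (G : RGraph L ar) (C : Set G.V) : Prop :=
  ∃ (k : ℕ) (f : Fin (k + 1) → G.V), Function.Injective f ∧ Set.range f = C ∧
    (∀ i : Fin k, G.Edge (f i.castSucc) (f i.succ)) ∧ G.Edge (f (Fin.last k)) (f 0)

/-- A guard: a set of vertices meeting every cycle. -/
def IsGuard (G : RGraph L ar) (W : Set G.V) : Prop :=
  ∀ C, G.IsCycle C → (C ∩ W).Nonempty

/-- The number of cycles `c(G)`. -/
noncomputable def numCycles (G : RGraph L ar) : ℕ :=
  Set.ncard {C : Set G.V | G.IsCycle C}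

/-- A vertex on a cycle. -/
def OnCycle (G : RGraph L ar) (a : G.V) : Prop := ∃ C, G.IsCycle C ∧ a ∈ C

/-- The root is a cycle vertex. -/
def RootOnCycle (G : RGraph L ar) : Prop := G.OnCycle G.root

/-- Acyclic graphs. -/
def Acyclic (G : RGraph L ar) : Prop := ∀ C, ¬ G.IsCycle C

/-- Bisimulations between graphs. -/
def IsBisim (G G' : RGraph L ar) (R : G.V → G'.V → Prop) : Prop :=
  ∀ a a', R a a' → ∃ h : G.label a = G'.label a',
    ∀ i : Fin (ar (G.label a)),
      R (G.succ a i) (G'.succ a' (Fin.cast (congrArg ar h) i))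

/-- Bisimilarity `G ≃ G'`: some bisimulation relates the roots. -/
def Bisim (G G' : RGraph L ar) : Prop :=
  ∃ R, G.IsBisim G' R ∧ R G.root G'.root

/-- Isomorphism `G ≅ G'`: a bijective bisimulation relating the roots. -/
def Iso (G G' : RGraph L ar) : Prop :=
  ∃ e : G.V ≃ G'.V, G.IsBisim G' (fun a b => e a = b) ∧ e G.root = G'.root

end RGraph

/-- Labels for the cyclic modal language `𝕃°`. -/
inductive FLab : Type
  | top | bot | var (n : ℕ) | neg | box | and | or | imp
deriving DecidableEq

/-- Arities of the labels. -/
@[reducible] def FLab.ar : FLab → ℕ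
  | .top => 0 | .bot => 0 | .var _ => 0
  | .neg => 1 | .box => 1
  | .and => 2 | .or => 2 | .imp => 2

/-- Raw formulas of `𝕃°`: graphs over the modal labels. -/
abbrev Fm := RGraph FLab FLab.ar

namespace Fm

/-- `p` occurs in `φ`. -/
def Occurs (φ : Fm) (p : ℕ) : Prop := ∃ a, φ.label a = .var p

/-- The set `bo(φ)` of box-occurrences. -/
def boOcc (φ : Fm) : Set φ.V := {a | φ.label a = .box}

/-- The guard condition: every cycle contains a box-occurrence. -/
def Guarded (φ : Fm) : Prop := φ.IsGuard φ.boOcc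

/-- `φ` is a formula: a (rooted, reachable) graph whose box-occurrences
form a guard. -/
def WF (φ : Fm) : Prop := φ.Reachable ∧ φ.Guarded

/-- An edge leaving a non-box vertex. -/
def EdgeNB (φ : Fm) (a b : φ.V) : Prop := φ.Edge a b ∧ φ.label a ≠ .box

/-- `φ` is modalised in `p`: every path from the root to a `p`-occurrence
passes through a box-occurrence. -/
def Modalised (φ : Fm) (p : ℕ) : Prop :=
  ∀ a, Relation.ReflTransGen φ.EdgeNB φ.root a → φ.label a ≠ .var p

theorem Modalised.root_ne {φ : Fm} {p : ℕ} (h : φ.Modalised p) :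
    φ.label φ.root ≠ .var p :=
  h φ.root Relation.ReflTransGen.refl

/-! ### Operations on formulas -/

/-- One-point graph with a 0-ary label. -/
def ofLab0 (l : FLab) : Fm where
  V := PUnit
  fin := inferInstance
  root := .unit
  label := fun _ => l
  succ := fun _ _ => .unit

def topFm : Fm := ofLab0 .top
def botFm : Fm := ofLab0 .bot
def varFm (n : ℕ) : Fm := ofLab0 (.var n)

def lab1 (l : FLab) (φ : Fm) : Option φ.V → FLab
  | none => l
  | some a => φ.label a

/-- Add a fresh root with 1-ary label `l` above `φ`. -/
def ofLab1 (l : FLab) (φ : Fm) : Fm where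
  V := Option φ.V
  fin := finite_option φ.fin
  root := none
  label := lab1 l φ
  succ := fun a => match a with
    | none => fun _ => some φ.root
    | some b => fun i => some (φ.succ b i)

def neg (φ : Fm) : Fm := ofLab1 .neg φ
def box (φ : Fm) : Fm := ofLab1 .box φ

def lab2 (l : FLab) (φ ψ : Fm) : Option (φ.V ⊕ ψ.V) → FLab
  | none => l
  | some (.inl a) => φ.label a
  | some (.inr b) => ψ.label b

/-- Add a fresh root with 2-ary label `l` above the disjoint sum of `φ`, `ψ`. -/
def ofLab2 (l : FLab) (φ ψ : Fm) : Fm where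
  V := Option (φ.V ⊕ ψ.V)
  fin := finite_option (by haveI := φ.fin; haveI := ψ.fin; exact inferInstance)
  root := none
  label := lab2 l φ ψ
  succ := fun a => match a with
    | none => fun i => if (i : ℕ) = 0 then some (.inl φ.root) else some (.inr ψ.root)
    | some (.inl a) => fun i => some (.inl (φ.succ a i))
    | some (.inr b) => fun i => some (.inr (ψ.succ b i))

def and (φ ψ : Fm) : Fm := ofLab2 .and φ ψ
def or (φ ψ : Fm) : Fm := ofLab2 .or φ ψ
def imp (φ ψ : Fm) : Fm := ofLab2 .imp φ ψ

/-- `φ ↔ ψ` as `(φ→ψ) ∧ (ψ→φ)`. -/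
def iff (φ ψ : Fm) : Fm := Fm.and (Fm.imp φ ψ) (Fm.imp ψ φ)

/-- The fixed point `Ϝp.φ`: identify the root with all `p`-occurrences,
keeping the label of the root.  (The root is not a `p`-occurrence, e.g.
because `φ` is modalised in `p`.) -/
def fix (φ : Fm) (p : ℕ) (h : φ.label φ.root ≠ .var p) : Fm where
  V := {a : φ.V // φ.label a ≠ .var p}
  fin := by haveI := φ.fin; exact inferInstance
  root := ⟨φ.root, h⟩
  label := fun a => φ.label a.1
  succ := fun a i =>
    if hb : φ.label (φ.succ a.1 i) = .var p then ⟨φ.root, h⟩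
    else ⟨φ.succ a.1 i, hb⟩

/-! ### Substitution -/

def varIdx : FLab → Option ℕ
  | .var q => some q
  | _ => none

/-- The copy of `σ q` hanging at a `q`-occurrence. -/
def copyT (σ : ℕ → Fm) : Option ℕ → Type
  | some q => (σ q).V
  | none => PUnit

theorem copyT_finite (σ : ℕ → Fm) : ∀ o, Finite (copyT σ o)
  | some q => (σ q).fin
  | none => show Finite PUnit from inferInstance

def copyRoot (σ : ℕ → Fm) : ∀ o, copyT σ o
  | some q => (σ q).root
  | none => .unit

def copyLabel (σ : ℕ → Fm) (d : FLab) : ∀ o, copyT σ o → FLab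
  | some q, b => (σ q).label b
  | none, _ => d

/-- Vertices of the substitution `φσ`. -/
def SubV (φ : Fm) (σ : ℕ → Fm) : Type :=
  Σ a : φ.V, copyT σ (varIdx (φ.label a))

def substSucc (φ : Fm) (σ : ℕ → Fm) (a : φ.V) :
    ∀ (o : Option ℕ), o = varIdx (φ.label a) → ∀ b : copyT σ o,
      Fin (copyLabel σ (φ.label a) o b).ar → SubV φ σ
  | some q, h, b, i => ⟨a, cast (congrArg (copyT σ) h) ((σ q).succ b i)⟩
  | none, _, _, i => ⟨φ.succ a i, copyRoot σ _⟩

/-- Simultaneous substitution: every `q`-occurrence of `φ` is identified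
with the root of a disjoint copy of `σ q`, keeping the label of the root
of `σ q`. -/
def subst (φ : Fm) (σ : ℕ → Fm) : Fm where
  V := SubV φ σ
  fin := by
    haveI := φ.fin
    haveI : ∀ a : φ.V, Finite (copyT σ (varIdx (φ.label a))) :=
      fun a => copyT_finite σ _
    exact (inferInstance : Finite (Σ a : φ.V, copyT σ (varIdx (φ.label a))))
  root := ⟨φ.root, copyRoot σ _⟩
  label := fun x => copyLabel σ (φ.label x.1) _ x.2
  succ := fun x => substSucc φ σ x.1 _ rfl x.2

/-- Substitution of a single variable, `φ[p:ψ]`. -/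
def subst1 (φ : Fm) (p : ℕ) (ψ : Fm) : Fm :=
  φ.subst (fun q => if q = p then ψ else varFm q)

/-! ### Snip -/

-- Redirect all incoming edges of the root to a new leaf labeled `p`.
open Classical in
noncomputable def snipC (φ : Fm) (p : ℕ) : Fm where
  V := Option φ.V
  fin := finite_option φ.fin
  root := some φ.root
  label := lab1 (.var p) φ
  succ := fun a => match a with
    | none => Fin.elim0
    | some a => fun i =>
        if φ.succ a i = φ.root then none else some (φ.succ a i)

-- `snip(φ,p)`: if the root is on a cycle, redirect all incoming edges
-- of the root to a new leaf labeled `p`; otherwise `φ` itself.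
open Classical in
noncomputable def snip (φ : Fm) (p : ℕ) : Fm :=
  if φ.RootOnCycle then φ.snipC p else φ

/-- `snip(φ,ψ) := snip(φ,p)[p:ψ]` (for a variable `p` not occurring in `φ`). -/
noncomputable def snipF (φ : Fm) (p : ℕ) (ψ : Fm) : Fm :=
  (φ.snip p).subst1 p ψ

theorem snip_root_ne {φ : Fm} {p : ℕ} (h : φ.RootOnCycle) (hp : ¬ φ.Occurs p) :
    (φ.snip p).label (φ.snip p).root ≠ .var p := by
  rw [snip, if_pos h]
  exact fun hc => hp ⟨φ.root, hc⟩

/-! ### The transitive closure modality `□•φ := Ϝp.□(φ∧p)` -/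

def bslab (φ : Fm) : Option (Option φ.V) → FLab
  | none => .box
  | some none => .and
  | some (some a) => φ.label a

/-- `□•φ := Ϝp.□(φ∧p)`, for `p` not occurring in `φ`: a box-root whose
`∧`-successor returns to the box-root. -/
def boxStar (φ : Fm) : Fm where
  V := Option (Option φ.V)
  fin := finite_option (finite_option φ.fin)
  root := none
  label := bslab φ
  succ := fun a => match a with
    | none => fun _ => some none
    | some none => fun i => if (i : ℕ) = 0 then some (some φ.root) else none
    | some (some a) => fun i => some (some (φ.succ a i))

/-- `⊡•φ := φ ∧ □•φ`. -/
def boxDotStar (φ : Fm) : Fm := Fm.and φ (boxStar φ)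

/-- Finite conjunctions. -/
def bigAnd : List Fm → Fm
  | [] => topFm
  | φ :: l => Fm.and φ (bigAnd l)

/-- Apply a label, as a connective, to arguments. -/
def applyLab : (l : FLab) → (Fin l.ar → Fm) → Fm
  | .top, _ => topFm
  | .bot, _ => botFm
  | .var n, _ => varFm n
  | .neg, f => neg (f 0)
  | .box, f => box (f 0)
  | .and, f => Fm.and (f 0) (f 1)
  | .or, f => Fm.or (f 0) (f 1)
  | .imp, f => Fm.imp (f 0) (f 1)

/-- First successor (defaulting to `a` itself at leaves). -/
def succ0 (φ : Fm) (a : φ.V) : φ.V :=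
  if h : 0 < (φ.label a).ar then φ.succ a ⟨0, h⟩ else a

/-- The subgraph of `φ` generated by `a`. -/
def restrict (φ : Fm) (a : φ.V) : Fm where
  V := {b : φ.V // Relation.ReflTransGen φ.Edge a b}
  fin := by haveI := φ.fin; exact inferInstance
  root := ⟨a, Relation.ReflTransGen.refl⟩
  label := fun b => φ.label b.1
  succ := fun b i => ⟨φ.succ b.1 i, b.2.tail ⟨i, rfl⟩⟩

/-- A variable not occurring in `φ`. -/
noncomputable def freshVar (φ : Fm) : ℕ := by
  classical
  haveI := φ.fin
  haveI : Fintype φ.V := Fintype.ofFinite _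
  exact Finset.univ.sup fun a => match φ.label a with | .var q => q + 1 | _ => 0

/-- `snip(φ,⊤)`. -/
noncomputable def snipTop (φ : Fm) : Fm := φ.snipF φ.freshVar topFm

/-- The list of box-occurrences of `φ`. -/
noncomputable def boxOccList (φ : Fm) : List φ.V := by
  classical
  haveI := φ.fin
  haveI : Fintype φ.V := Fintype.ofFinite _
  exact (Finset.univ.filter fun a => φ.label a = FLab.box).toList

end Fm

/-! ### Propositional tautologies (as parse trees) -/

inductive PForm : Type
  | var (n : ℕ) | top | bot
  | neg (A : PForm) | and (A B : PForm) | or (A B : PForm) | imp (A B : PForm)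

def PForm.eval (v : ℕ → Bool) : PForm → Bool
  | .var n => v n
  | .top => true
  | .bot => false
  | .neg A => !A.eval v
  | .and A B => A.eval v && B.eval v
  | .or A B => A.eval v || B.eval v
  | .imp A B => !A.eval v || B.eval v

/-- Propositional tautology. -/
def PForm.Taut (A : PForm) : Prop := ∀ v, A.eval v = true

/-- Substitution instance of a parse tree by formulas of `𝕃°`. -/
def PForm.substFm (σ : ℕ → Fm) : PForm → Fm
  | .var n => σ n
  | .top => Fm.topFm
  | .bot => Fm.botFm
  | .neg A => Fm.neg (A.substFm σ)
  | .and A B => Fm.and (A.substFm σ) (B.substFm σ)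
  | .or A B => Fm.or (A.substFm σ) (B.substFm σ)
  | .imp A B => Fm.imp (A.substFm σ) (B.substFm σ)

/-! ### Cyclic Henkin Logic -/

/-- Cyclic Henkin Logic `CHL`: modus ponens, necessitation, substitution
instances of propositional tautologies, distribution, bisimilarity, and
Löb's Rule. -/
inductive CHL : Fm → Prop
  | mp {φ ψ : Fm} : CHL (Fm.imp φ ψ) → CHL φ → CHL ψ
  | nec {φ : Fm} : CHL φ → CHL (Fm.box φ)
  | taut {A : PForm} (σ : ℕ → Fm) : A.Taut → CHL (A.substFm σ)
  | k (φ ψ : Fm) : CHL (Fm.imp (Fm.box (Fm.imp φ ψ)) (Fm.imp (Fm.box φ) (Fm.box ψ)))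
  | bisim {φ ψ : Fm} : RGraph.Bisim φ ψ → CHL (Fm.iff φ ψ)
  | lob {φ : Fm} : CHL (Fm.imp (Fm.box φ) φ) → CHL φ

/-- `GL°`: `CHL` plus the axiom scheme `□φ → □□φ`. -/
inductive GLo : Fm → Prop
  | mp {φ ψ : Fm} : GLo (Fm.imp φ ψ) → GLo φ → GLo ψ
  | nec {φ : Fm} : GLo φ → GLo (Fm.box φ)
  | taut {A : PForm} (σ : ℕ → Fm) : A.Taut → GLo (A.substFm σ)
  | k (φ ψ : Fm) : GLo (Fm.imp (Fm.box (Fm.imp φ ψ)) (Fm.imp (Fm.box φ) (Fm.box ψ)))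
  | bisim {φ ψ : Fm} : RGraph.Bisim φ ψ → GLo (Fm.iff φ ψ)
  | lob {φ : Fm} : GLo (Fm.imp (Fm.box φ) φ) → GLo φ
  | four (φ : Fm) : GLo (Fm.imp (Fm.box φ) (Fm.box (Fm.box φ)))

/-- Löb's Logic `GL` on the acyclic formulas. -/
inductive GLlogic : Fm → Prop
  | mp {φ ψ : Fm} : GLlogic (Fm.imp φ ψ) → GLlogic φ → GLlogic ψ
  | nec {φ : Fm} : GLlogic φ → GLlogic (Fm.box φ)
  | taut {A : PForm} (σ : ℕ → Fm) : (∀ q, (σ q).Acyclic) → A.Taut → GLlogic (A.substFm σ)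
  | k (φ ψ : Fm) : φ.Acyclic → ψ.Acyclic →
      GLlogic (Fm.imp (Fm.box (Fm.imp φ ψ)) (Fm.imp (Fm.box φ) (Fm.box ψ)))
  | bisim {φ ψ : Fm} : φ.Acyclic → ψ.Acyclic → RGraph.Bisim φ ψ → GLlogic (Fm.iff φ ψ)
  | lob {φ : Fm} : φ.Acyclic → GLlogic (Fm.imp (Fm.box φ) φ) → GLlogic φ
  | four (φ : Fm) : φ.Acyclic → GLlogic (Fm.imp (Fm.box φ) (Fm.box (Fm.box φ)))

/-! ### Systems of equations -/

/-- The system `ℰ` (given by `E` on the finite variable set `Q`) is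
modalised: its dependency graph is acyclic. -/
def SysModalised (Q : Finset ℕ) (E : ℕ → Fm) : Prop :=
  ∀ q ∈ Q, ¬ Relation.TransGen
      (fun x y => x ∈ Q ∧ y ∈ Q ∧ ¬ (E x).Modalised y) q q

/-- The substitution determined by a solution candidate `F` on `Q`. -/
def sysSubst (Q : Finset ℕ) (F : ℕ → Fm) : ℕ → Fm :=
  fun q => if q ∈ Q then F q else Fm.varFm q

/-- `F` solves the system `E` on `Q`. -/
def IsSolution (Q : Finset ℕ) (E : ℕ → Fm) (F : ℕ → Fm) : Prop :=
  (∀ q ∈ Q, (F q).WF) ∧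
  (∀ q ∈ Q, ∀ q' ∈ Q, ¬ (F q).Occurs q') ∧
  (∀ q ∈ Q, RGraph.Bisim (F q) ((E q).subst (sysSubst Q F)))

/-! ### Local translations -/

/-- A local translation of the formula `φ` into the logic `Λ`. -/
def IsLocalTranslation (Λ : Fm → Prop) (φ : Fm) (T : φ.V → Fm) : Prop :=
  ∀ a : φ.V, Λ (Fm.iff (T a) (Fm.applyLab (φ.label a) (fun i => T (φ.succ a i))))

-- Substitution determined by a finite assignment.
open Classical in
noncomputable def substOf {ι : Type} (s : ι → ℕ) (ψ : ι → Fm) : ℕ → Fm :=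
  fun q => if h : ∃ i, s i = q then ψ h.choose else Fm.varFm q

/-- The characterising equations of the de Jongh–Sambin map `js*`,
defined by course-of-values recursion on the number of cycles and guard
recursion on the box-occurrences on a cycle. -/
def IsJsStar (jsS : (φ : Fm) → φ.V → Fm) : Prop :=
  (∀ (φ : Fm) (a : φ.V), ¬ (φ.label a = .box ∧ φ.OnCycle a) →
      jsS φ a = Fm.applyLab (φ.label a) (fun i => jsS φ (φ.succ a i))) ∧
  (∀ (φ : Fm) (a : φ.V), φ.label a = .box → φ.OnCycle a →
      jsS φ a = jsS (Fm.snipTop (φ.restrict a)) (Fm.snipTop (φ.restrict a)).root) ∧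
  (∀ (φ : Fm) (a : φ.V), (jsS φ a).Acyclic)

namespace Fm

theorem eq_var_of_varIdx_eq_some {l : FLab} {q : ℕ} (h : varIdx l = some q) : l = .var q := by
  cases l <;> simp_all [varIdx]

theorem label_eq_of_eq_varFm {χ : Fm} {q : ℕ} (h : χ = varFm q) (c : χ.V) :
    χ.label c = .var q := by
  subst h; rfl

section Subst

variable {φ : Fm} {σ : ℕ → Fm} {a : φ.V} {q : ℕ}

/-- The vertex `c` of the copy of `σ q` hanging at the `q`-occurrence `a` of `φ`. -/
def SubV.inCopy (ha : φ.label a = .var q) (c : (σ q).V) : SubV φ σ :=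
  ⟨a, cast (congrArg (fun l => copyT σ (varIdx l)) ha.symm) c⟩

theorem SubV.mk_eq_inCopy (ha : φ.label a = .var q) (x : copyT σ (varIdx (φ.label a))) :
    (⟨a, x⟩ : SubV φ σ) =
      SubV.inCopy ha (cast (congrArg (fun l => copyT σ (varIdx l)) ha) x) :=
  congrArg (Sigma.mk a) (eq_of_heq ((cast_heq _ _).trans (cast_heq _ _)).symm)

theorem SubV.mk_copyRoot_eq_inCopy (ha : φ.label a = .var q) :
    (⟨a, copyRoot σ _⟩ : SubV φ σ) = SubV.inCopy ha (σ q).root := by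
  -- `varIdx (φ.label a)` is generalised to `o` so that `ho` can be substituted.
  have key : ∀ {o} (ho : o = some q), HEq (copyRoot σ o) (σ q).root := by
    rintro _ rfl; rfl
  exact congrArg (Sigma.mk a)
    (eq_of_heq ((key (congrArg varIdx ha)).trans (cast_heq _ _).symm))

theorem subst_label_inCopy (ha : φ.label a = .var q) (c : (σ q).V) :
    (φ.subst σ).label (SubV.inCopy ha c) = (σ q).label c := by
  have key : ∀ {o} (ho : o = some q) {x : copyT σ o}, HEq x c →
      copyLabel σ (φ.label a) o x = (σ q).label c := by
    rintro _ rfl _ ⟨⟩; rfl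
  exact key (congrArg varIdx ha) (cast_heq _ _)

theorem subst_succ_inCopy (ha : φ.label a = .var q) (c : (σ q).V)
    (i : Fin ((φ.subst σ).label (SubV.inCopy ha c)).ar) :
    (φ.subst σ).succ (SubV.inCopy ha c) i =
      SubV.inCopy ha ((σ q).succ c (Fin.cast (congrArg FLab.ar (subst_label_inCopy ha c)) i)) := by
  have key : ∀ {o} (h : o = varIdx (φ.label a)), o = some q → ∀ {x : copyT σ o}, HEq x c →
      ∀ (i : Fin (copyLabel σ (φ.label a) o x).ar) (j : Fin ((σ q).label c).ar),
        (i : ℕ) = j → substSucc φ σ a o h x i = SubV.inCopy ha ((σ q).succ c j) := by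
    rintro _ h rfl _ ⟨⟩ i j hij
    cases Fin.ext hij
    rfl
  exact key rfl (congrArg varIdx ha) (cast_heq _ _) i _ rfl

theorem subst_label_of_varIdx_eq_none (hv : varIdx (φ.label a) = none)
    (x : copyT σ (varIdx (φ.label a))) : (φ.subst σ).label ⟨a, x⟩ = φ.label a := by
  revert x
  show ∀ x, copyLabel σ (φ.label a) (varIdx (φ.label a)) x = φ.label a
  rw [hv]
  exact fun _ => rfl

theorem subst_succ_of_varIdx_eq_none (hv : varIdx (φ.label a) = none)
    (x : copyT σ (varIdx (φ.label a))) (i : Fin ((φ.subst σ).label ⟨a, x⟩).ar) :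
    (φ.subst σ).succ ⟨a, x⟩ i =
      ⟨φ.succ a (Fin.cast (congrArg FLab.ar (subst_label_of_varIdx_eq_none hv x)) i),
        copyRoot σ _⟩ := by
  have key : ∀ {o} (h : o = varIdx (φ.label a)), o = none → ∀ (x : copyT σ o)
      (i : Fin (copyLabel σ (φ.label a) o x).ar) (j : Fin (φ.label a).ar),
        (i : ℕ) = j → substSucc φ σ a o h x i = ⟨φ.succ a j, copyRoot σ _⟩ := by
    rintro _ h rfl x i j hij
    cases Fin.ext hij
    rfl
  exact key rfl hv x i _ rfl

theorem subst_label_mk_of_ne {p : ℕ} (hσ : ∀ q ≠ p, σ q = varFm q) (ha : φ.label a ≠ .var p)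
    (x : copyT σ (varIdx (φ.label a))) : (φ.subst σ).label ⟨a, x⟩ = φ.label a := by
  obtain hv | ⟨q, hv⟩ := Option.eq_none_or_eq_some (varIdx (φ.label a))
  · exact subst_label_of_varIdx_eq_none hv x
  · have hq := eq_var_of_varIdx_eq_some hv
    rw [SubV.mk_eq_inCopy hq, subst_label_inCopy]
    exact (label_eq_of_eq_varFm (hσ q fun hqp => ha (hqp ▸ hq)) _).trans hq.symm

end Subst

section Fix

variable {φ : Fm} {p : ℕ} {hr : φ.label φ.root ≠ .var p} {a : φ.V} {i : Fin (φ.label a).ar}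

theorem fix_succ_of_label_eq (ha : φ.label a ≠ .var p) (hb : φ.label (φ.succ a i) = .var p) :
    (φ.fix p hr).succ ⟨a, ha⟩ i = ⟨φ.root, hr⟩ :=
  dif_pos hb

theorem fix_succ_of_label_ne (ha : φ.label a ≠ .var p) (hb : φ.label (φ.succ a i) ≠ .var p) :
    (φ.fix p hr).succ ⟨a, ha⟩ i = ⟨φ.succ a i, hb⟩ :=
  dif_neg hb

end Fix

/-- The bisimulation `σ p ≃ Ϝp.φ` built from a bisimulation `R : σ p ≃ φσ`. Outside the copies
of `σ p`, `R` already relates vertices of `σ p` to vertices of `φ` that survive in `Ϝp.φ`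
(`base`); a vertex that `R` relates to the vertex `c` of a copy of `σ p` takes over the partners
of `c` itself (`step`). -/
inductive FixRel (φ : Fm) (σ : ℕ → Fm) (p : ℕ) (hr : φ.label φ.root ≠ .var p)
    (R : (σ p).V → (φ.subst σ).V → Prop) : (σ p).V → (φ.fix p hr).V → Prop
  | base {b : (σ p).V} {a : φ.V} (ha : φ.label a ≠ .var p) {x : copyT σ (varIdx (φ.label a))} :
      R b ⟨a, x⟩ → FixRel φ σ p hr R b ⟨a, ha⟩
  | step {b c : (σ p).V} {a : φ.V} (ha : φ.label a = .var p) {y : (φ.fix p hr).V} :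
      R b (SubV.inCopy ha c) → FixRel φ σ p hr R c y → FixRel φ σ p hr R b y

theorem isBisim_fixRel {φ : Fm} {σ : ℕ → Fm} {p : ℕ} (hr : φ.label φ.root ≠ .var p)
    (hσ : ∀ q ≠ p, σ q = varFm q) {R : (σ p).V → (φ.subst σ).V → Prop}
    (hR : (σ p).IsBisim (φ.subst σ) R) (hroot : R (σ p).root (φ.subst σ).root) :
    (σ p).IsBisim (φ.fix p hr) (FixRel φ σ p hr R) := by
  have hroot' : FixRel φ σ p hr R (σ p).root ⟨φ.root, hr⟩ := .base hr hroot
  intro b y hby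
  induction hby with
  | @base b a ha x hbx =>
    obtain ⟨hl, hs⟩ := hR b _ hbx
    have hlab := hl.trans (subst_label_mk_of_ne hσ ha x)
    refine ⟨hlab, fun i => ?_⟩
    obtain hv | ⟨q, hv⟩ := Option.eq_none_or_eq_some (varIdx (φ.label a))
    · set j := Fin.cast (congrArg FLab.ar hlab) i
      have hsi : R ((σ p).succ b i) ⟨φ.succ a j, copyRoot σ _⟩ := by
        have := hs i
        rwa [subst_succ_of_varIdx_eq_none hv] at this
      by_cases hb : φ.label (φ.succ a j) = .var p
      · rw [SubV.mk_copyRoot_eq_inCopy hb] at hsi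
        exact (fix_succ_of_label_eq ha hb).symm ▸ .step hb hsi hroot'
      · exact (fix_succ_of_label_ne ha hb).symm ▸ .base hb hsi
    · exact (Fin.cast (by rw [hlab, eq_var_of_varIdx_eq_some hv]) i : Fin 0).elim0
  | @step b c a ha y hbc _ ih =>
    obtain ⟨hl, hs⟩ := hR b _ hbc
    obtain ⟨hl', hs'⟩ := ih
    have hlab := hl.trans (subst_label_inCopy ha c)
    refine ⟨hlab.trans hl', fun i => ?_⟩
    have hsi := hs i
    rw [subst_succ_inCopy] at hsi
    exact .step ha hsi (hs' (Fin.cast (congrArg FLab.ar hlab) i))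

theorem bisim_fix_of_bisim_subst {φ ψ : Fm} {σ : ℕ → Fm} {p : ℕ}
    (hr : φ.label φ.root ≠ .var p) (hσp : σ p = ψ) (hσ : ∀ q ≠ p, σ q = varFm q)
    (h : ψ.Bisim (φ.subst σ)) : ψ.Bisim (φ.fix p hr) := by
  subst hσp
  obtain ⟨R, hR, hroot⟩ := h
  exact ⟨FixRel φ σ p hr R, isBisim_fixRel hr hσ hR hroot, .base hr hroot⟩

end Fm

theorem fixpoint_unique_bisim_general (φ ψ : Fm) (p : ℕ)
    (hmod : φ.Modalised p) (h : RGraph.Bisim ψ (φ.subst1 p ψ)) :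
    RGraph.Bisim ψ (φ.fix p hmod.root_ne) :=
  Fm.bisim_fix_of_bisim_subst hmod.root_ne (if_pos rfl) (fun _ hq => if_neg hq) h

/-- **Uniqueness of fixed points modulo bisimulation** (Theorem
`unibis`): if `φ` is modalised in `p` and `ψ ≃ φ[p:ψ]`, then
`ψ ≃ Ϝp.φ`. -/
theorem fixpoint_unique_bisim (φ ψ : Fm) (p : ℕ) (hφ : φ.WF) (hψ : ψ.WF)
    (hmod : φ.Modalised p) (h : RGraph.Bisim ψ (φ.subst1 p ψ)) :
    RGraph.Bisim ψ (φ.fix p hmod.root_ne) :=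
  fixpoint_unique_bisim_general φ ψ p hmod h
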